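/- Let q_c be a root of unity associated with p ≥ 2, let m be a half-integer and i ≥ 0 an integer. Let j and j' be half-integers forming a bound pair for m and p (i.e., j ≠ j', j − m, j' − m ∈ ℤ≥0, ⌊(j−m)/p⌋ = ⌊(j'−m)/p⌋, and j + j' ≡ p − 1 (mod p)), and assume i ≥ j − m and i ≥ j' − m. Write i = r·p + a, j − m = u·p + d, j' − m = u·p + d' with 0 ≤ a, d, d' ≤ p−1. Then the following three statements are equivalent: (1) d ≤ a and d' ≤ a; (2) a_{i,j,m} is singular at q_c; (3) a_{i,j',m} is singular at q_c. -/

import Mathlib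

/-!
At a root of unity `q_c` associated with `p`, the q-number `[n]` vanishes iff `p ∣ n`, and then
`[n] / [p]` has a nonzero limit. Measuring orders of vanishing in powers of `[p]` as `q → q_c`
through generic `q`, `[n]!` has order `⌊n / p⌋`, so `[x + y choose x]` has order `c(x, y)`, the
carry in the base-`p` addition of `x` and `y` (a q-analogue of Kummer's theorem). Hence, with
`k = j - m` and `s = j + m`, `a_{i,j,m}` has order
`c(k, i - k) - c(i + 1, s) + [p ∣ k + s + 1] - [p ∣ i + 1]` and is singular exactly when this
order is negative. For a bound pair, `s ≡ -k' - 1 (mod p)`, so the order reduces to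
`[a < d] - [d' ≤ a]`: it is negative iff `d ≤ a ∧ d' ≤ a`, a condition symmetric in `j` and `j'`.
-/

open Matrix Filter Topology BigOperators Finset

noncomputable section

/-- Spin configurations: basis labels of `(ℂ²)^{⊗n}`; `0` is `+`, `1` is `−`. -/
abbrev Spins (n : ℕ) := Fin n → Fin 2

/-- σ⁺ = [[0,1],[0,0]] -/
def sigmaP : Matrix (Fin 2) (Fin 2) ℂ := fun a b => if a = 0 ∧ b = 1 then 1 else 0

/-- σ⁻ = [[0,0],[1,0]] -/
def sigmaM : Matrix (Fin 2) (Fin 2) ℂ := fun a b => if a = 1 ∧ b = 0 then 1 else 0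

/-- diagonal entry of K = diag(v, v⁻¹) -/
def Kdiag (v : ℂ) (a : Fin 2) : ℂ := if a = 0 then v else v⁻¹

/-- `S_i^A = K^{⊗(i−1)} ⊗ A ⊗ (K⁻¹)^{⊗(n−i)}` as a matrix on `(ℂ²)^{⊗n}`. -/
def siteOp (n : ℕ) (v : ℂ) (A : Matrix (Fin 2) (Fin 2) ℂ) (i : Fin n) :
    Matrix (Spins n) (Spins n) ℂ :=
  fun x y => ∏ k : Fin n,
    if k < i then (if x k = y k then Kdiag v (x k) else 0)
    else if k = i then A (x k) (y k)
    else (if x k = y k then Kdiag v⁻¹ (x k) else 0)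

/-- `S^+ = Σ_i S_i^+`. -/
def SpOp (n : ℕ) (v : ℂ) : Matrix (Spins n) (Spins n) ℂ := ∑ i : Fin n, siteOp n v sigmaP i

/-- `S^- = Σ_i S_i^-`. -/
def SmOp (n : ℕ) (v : ℂ) : Matrix (Spins n) (Spins n) ℂ := ∑ i : Fin n, siteOp n v sigmaM i

/-- `Σ^z = Σ_i 1 ⊗ ⋯ ⊗ σ^z ⊗ ⋯ ⊗ 1` (diagonal). -/
def SzOp (n : ℕ) : Matrix (Spins n) (Spins n) ℂ :=
  fun x y => if x = y then ∑ k : Fin n, (if x k = 0 then (1 : ℂ) else -1) else 0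

/-- symmetric q-number `[k] = (q^k − q^{−k})/(q − q⁻¹)`. -/
def qNum (q : ℂ) (k : ℤ) : ℂ := (q ^ k - q ^ (-k)) / (q - q⁻¹)

/-- q-factorial `[k]! = [k][k−1]⋯[1]`, `[0]! = 1`. -/
def qFact (q : ℂ) : ℕ → ℂ
  | 0 => 1
  | k + 1 => qNum q (k + 1) * qFact q k

/-- q-binomial `[k choose l]`, zero unless `0 ≤ l ≤ k`. -/
def qBinom (q : ℂ) (k l : ℤ) : ℂ :=
  if 0 ≤ l ∧ l ≤ k then qFact q k.toNat / (qFact q l.toNat * qFact q (k - l).toNat) else 0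

/-- `q` is generic: nonzero and not a root of unity. -/
def Generic (q : ℂ) : Prop := q ≠ 0 ∧ ∀ k : ℕ, 0 < k → q ^ k ≠ 1

def GenericSet : Set ℂ := {q | Generic q}

/-- the root of unity `q` is associated with `p`: `p ≥ 2` is minimal with `q^{2p} = 1`. -/
def AssocRootOfUnity (q : ℂ) (p : ℕ) : Prop :=
  2 ≤ p ∧ q ^ (2 * p) = 1 ∧ ∀ k : ℕ, 0 < k → k < p → q ^ (2 * k) ≠ 1

/-- the coefficient `a_{i,j,m}` of the paper, with `k = j − m` and `s = j + m`:
`a = (−1)^{i+k} [i choose k] [i+s+1 choose i+1]⁻¹ [k+s+1] / [i+1]`. -/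
def aCoeff (q : ℂ) (i k s : ℤ) : ℂ :=
  (-1 : ℂ) ^ (i + k) * qBinom q i k * (qBinom q (i + s + 1) (i + 1))⁻¹ *
    qNum q (k + s + 1) / qNum q (i + 1)

/-- `S_r = (S^−)^r (S^+)^r / ([r]!)²` with `q = v²`. -/
def SOp (n : ℕ) (v : ℂ) (r : ℕ) : Matrix (Spins n) (Spins n) ℂ :=
  ((qFact (v ^ 2) r) ^ 2)⁻¹ • (SmOp n v ^ r * SpOp n v ^ r)

/-- a function of `q` is regular at `q_c` if it has a finite limit as `q → q_c`
through generic values of `q`. -/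
def RegularAt (f : ℂ → ℂ) (qc : ℂ) : Prop :=
  ∃ L : ℂ, Tendsto f (𝓝[GenericSet] qc) (𝓝 L)

section Order

variable {α 𝕜 : Type*} [NormedField 𝕜] {l : Filter α} {e f g : α → 𝕜} {m n : ℤ}

def HasOrder (l : Filter α) (e f : α → 𝕜) (n : ℤ) : Prop :=
  ∃ g : α → 𝕜, (∃ L ≠ 0, Tendsto g l (𝓝 L)) ∧ ∀ᶠ x in l, f x = g x * e x ^ n

theorem HasOrder.of_tendsto {L : 𝕜} (hf : Tendsto f l (𝓝 L)) (hL : L ≠ 0) :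
    HasOrder l e f 0 :=
  ⟨f, ⟨L, hL, hf⟩, .of_forall fun x => by rw [zpow_zero, mul_one]⟩

theorem HasOrder.mul (he : ∀ᶠ x in l, e x ≠ 0) (hf : HasOrder l e f m)
    (hg : HasOrder l e g n) : HasOrder l e (fun x => f x * g x) (m + n) := by
  obtain ⟨u, ⟨L, hL, hu⟩, hfu⟩ := hf
  obtain ⟨v, ⟨M, hM, hv⟩, hgv⟩ := hg
  refine ⟨fun x => u x * v x, ⟨L * M, mul_ne_zero hL hM, hu.mul hv⟩, ?_⟩
  filter_upwards [he, hfu, hgv] with x hx hfx hgx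
  rw [hfx, hgx, zpow_add₀ hx]
  ring

theorem HasOrder.inv (hf : HasOrder l e f n) : HasOrder l e (fun x => (f x)⁻¹) (-n) := by
  obtain ⟨u, ⟨L, hL, hu⟩, hfu⟩ := hf
  refine ⟨fun x => (u x)⁻¹, ⟨L⁻¹, inv_ne_zero hL, hu.inv₀ hL⟩, ?_⟩
  filter_upwards [hfu] with x hfx
  rw [hfx, mul_inv, _root_.zpow_neg]

theorem HasOrder.div (he : ∀ᶠ x in l, e x ≠ 0) (hf : HasOrder l e f m)
    (hg : HasOrder l e g n) : HasOrder l e (fun x => f x / g x) (m - n) := by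
  simpa only [div_eq_mul_inv, sub_eq_add_neg] using hf.mul he hg.inv

theorem HasOrder.exists_tendsto_iff [l.NeBot] (he₀ : Tendsto e l (𝓝 0))
    (he : ∀ᶠ x in l, e x ≠ 0) (hf : HasOrder l e f n) :
    (∃ L, Tendsto f l (𝓝 L)) ↔ 0 ≤ n := by
  obtain ⟨u, ⟨L, hL, hu⟩, hfu⟩ := hf
  constructor
  · rintro ⟨L', hf⟩
    by_contra! hn
    lift -n to ℕ using (by omega) with k hk
    have hk0 : k ≠ 0 := by omega
    have hu0 : Tendsto u l (𝓝 (L' * 0 ^ k)) := by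
      refine (hf.mul (he₀.pow k)).congr' ?_
      filter_upwards [he, hfu] with x hx hfx
      rw [hfx, ← zpow_natCast, hk, mul_assoc, ← zpow_add₀ hx, add_neg_cancel, zpow_zero,
        mul_one]
    exact hL (tendsto_nhds_unique hu hu0 |>.trans (by rw [zero_pow hk0, mul_zero]))
  · intro hn
    lift n to ℕ using hn with k
    refine ⟨L * 0 ^ k, (hu.mul (he₀.pow k)).congr' ?_⟩
    filter_upwards [hfu] with x hfx
    rw [hfx, zpow_natCast]

end Order

theorem sub_inv_eq_zero_iff {K : Type*} [DivisionRing K] {a : K} (ha : a ≠ 0) :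
    a - a⁻¹ = 0 ↔ a ^ 2 = 1 := by
  rw [sub_eq_zero, ← mul_eq_one_iff_eq_inv₀ ha, sq]

theorem qNum_natCast (q : ℂ) (n : ℕ) : qNum q n = (q ^ n - (q ^ n)⁻¹) / (q - q⁻¹) := by
  rw [qNum, _root_.zpow_neg, zpow_natCast]

theorem qNum_eq_zero_iff {q : ℂ} (hq : q ≠ 0) (hq2 : q ^ 2 ≠ 1) (n : ℕ) :
    qNum q n = 0 ↔ q ^ (2 * n) = 1 := by
  have hden : q - q⁻¹ ≠ 0 := (sub_inv_eq_zero_iff hq).not.mpr hq2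
  rw [qNum_natCast, div_eq_zero_iff, or_iff_left hden, sub_inv_eq_zero_iff (pow_ne_zero n hq),
    ← pow_mul, mul_comm]

theorem continuousAt_qNum {q : ℂ} (hq : q ≠ 0) (hq2 : q ^ 2 ≠ 1) (n : ℤ) :
    ContinuousAt (fun q => qNum q n) q := by
  have hden : q - q⁻¹ ≠ 0 := (sub_inv_eq_zero_iff hq).not.mpr hq2
  unfold qNum
  exact (((continuousAt_zpow₀ q n (.inl hq)).sub (continuousAt_zpow₀ q (-n) (.inl hq))).div
    (continuousAt_id.sub (continuousAt_inv₀ hq)) hden)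

theorem qNum_natCast_mul {q : ℂ} (hq : q ≠ 0) (n c : ℕ) :
    qNum q (n * c : ℕ) =
      qNum q n * (q ^ n * (q ^ (n * c))⁻¹ * ∑ t ∈ range c, (q ^ (2 * n)) ^ t) := by
  rw [qNum_natCast, qNum_natCast, div_mul_eq_mul_div, mul_comm 2 n, pow_mul, pow_mul]
  congr 1
  have hgeom := geom_sum_mul ((q ^ n) ^ 2) c
  have hx : q ^ n ≠ 0 := pow_ne_zero n hq
  generalize q ^ n = x at hx hgeom ⊢
  field_simp
  linear_combination -hgeom

theorem mem_genericSet_of_one_lt_norm {q : ℂ} (hq : 1 < ‖q‖) : q ∈ GenericSet := by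
  refine ⟨norm_pos_iff.mp (one_pos.trans hq), fun k hk hqk => ?_⟩
  have := one_lt_pow₀ hq hk.ne'
  rw [← norm_pow, hqk, norm_one] at this
  exact lt_irrefl _ this

theorem Generic.sq_ne_one {q : ℂ} (hq : Generic q) : q ^ 2 ≠ 1 := hq.2 2 two_pos

theorem Generic.qNum_ne_zero {q : ℂ} (hq : Generic q) {n : ℕ} (hn : 0 < n) : qNum q n ≠ 0 := by
  rw [Ne, qNum_eq_zero_iff hq.1 hq.sq_ne_one]
  exact hq.2 _ (by omega)

def addCarry (p x y : ℕ) : ℤ := if p ≤ x % p + y % p then 1 else 0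

section Carries

variable {p i k k' s : ℕ}

theorem addCarry_sub (hp : 0 < p) (hki : k ≤ i) :
    addCarry p k (i - k) = if i % p < k % p then 1 else 0 := by
  obtain ⟨y, rfl⟩ := Nat.exists_eq_add_of_le hki
  have := Nat.mod_lt k hp
  have := Nat.mod_lt y hp
  rw [addCarry, Nat.add_sub_cancel_left, Nat.add_mod_eq_ite]
  split_ifs <;> omega

theorem addCarry_succ_add (hp : 2 ≤ p) :
    addCarry p (i + 1) s + (if p ∣ i + 1 then 1 else 0) =
      if p ≤ i % p + s % p + 1 then 1 else 0 := by
  have := Nat.mod_lt i (by omega : 0 < p)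
  have := Nat.mod_lt s (by omega : 0 < p)
  simp only [addCarry, Nat.dvd_iff_mod_eq_zero, Nat.add_mod_eq_ite,
    Nat.one_mod_eq_one.mpr (by omega : p ≠ 1)]
  split_ifs <;> first | contradiction | omega

theorem mod_add_mod_add_one_eq (hp : 2 ≤ p) (h : p ∣ s + k + 1) : s % p + k % p + 1 = p := by
  have := Nat.mod_lt s (by omega : 0 < p)
  have := Nat.mod_lt k (by omega : 0 < p)
  rw [Nat.dvd_iff_mod_eq_zero, Nat.add_mod_eq_ite, Nat.add_mod_eq_ite,
    Nat.one_mod_eq_one.mpr (by omega)] at h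
  split_ifs at h <;> omega

theorem not_dvd_add_add_one (h : p ∣ s + k' + 1) (hk : k % p ≠ k' % p) : ¬p ∣ k + s + 1 := by
  intro h'
  have hdiff : (p : ℤ) ∣ k - k' := by
    have := Int.dvd_sub (Int.natCast_dvd_natCast.mpr h') (Int.natCast_dvd_natCast.mpr h)
    push_cast at this
    convert this using 1
    ring
  exact hk (Nat.modEq_iff_dvd.mpr hdiff).symm

end Carries

theorem qFact_succ (q : ℂ) (n : ℕ) : qFact q (n + 1) = qNum q (n + 1 : ℕ) * qFact q n := by
  rw [qFact, Nat.cast_succ]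

theorem qBinom_natCast (q : ℂ) {n l : ℕ} (hln : l ≤ n) :
    qBinom q n l = qFact q n / (qFact q l * qFact q (n - l)) := by
  rw [qBinom, if_pos ⟨Int.natCast_nonneg l, Int.ofNat_le.mpr hln⟩, ← Nat.cast_sub hln]
  simp only [Int.toNat_natCast]

namespace AssocRootOfUnity

variable {p : ℕ} {qc : ℂ} (hroot : AssocRootOfUnity qc p)
include hroot

theorem ne_zero : qc ≠ 0 := by
  rintro rfl
  exact zero_ne_one ((zero_pow (by have := hroot.1; omega)).symm.trans hroot.2.1)

theorem pow_two_mul_eq_one_iff (n : ℕ) : qc ^ (2 * n) = 1 ↔ p ∣ n := by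
  have hp : 0 < p := by have := hroot.1; omega
  have hsplit : qc ^ (2 * n) = qc ^ (2 * (n % p)) * (qc ^ (2 * p)) ^ (n / p) := by
    rw [← pow_mul, ← pow_add]
    conv_lhs => rw [← Nat.mod_add_div n p]
    ring_nf
  rw [hsplit, hroot.2.1, one_pow, mul_one, Nat.dvd_iff_mod_eq_zero]
  refine ⟨fun h => by_contra fun hn => ?_, fun h => by rw [h, mul_zero, pow_zero]⟩
  exact hroot.2.2 (n % p) (Nat.pos_of_ne_zero hn) (Nat.mod_lt n hp) h

theorem sq_ne_one : qc ^ 2 ≠ 1 := by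
  have h := (hroot.pow_two_mul_eq_one_iff 1).not.mpr (by rw [Nat.dvd_one]; have := hroot.1; omega)
  rwa [mul_one] at h

theorem norm_eq_one : ‖qc‖ = 1 := by
  have h := congrArg norm hroot.2.1
  rwa [norm_pow, norm_one, pow_eq_one_iff_of_nonneg (norm_nonneg _) (by have := hroot.1; omega)] at h

theorem qNum_eq_zero_iff (n : ℕ) : qNum qc n = 0 ↔ p ∣ n := by
  rw [_root_.qNum_eq_zero_iff hroot.ne_zero hroot.sq_ne_one, hroot.pow_two_mul_eq_one_iff]

theorem neBot_nhdsWithin_genericSet : (𝓝[GenericSet] qc).NeBot := by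
  have hcont : Tendsto (fun r : ℝ => (r : ℂ) * qc) (𝓝[>] 1) (𝓝 qc) := by
    have : Continuous fun r : ℝ => (r : ℂ) * qc := by fun_prop
    simpa using (this.tendsto 1).mono_left nhdsWithin_le_nhds
  refine (tendsto_nhdsWithin_iff.mpr ⟨hcont, ?_⟩).neBot
  filter_upwards [self_mem_nhdsWithin] with r (hr : 1 < r)
  apply mem_genericSet_of_one_lt_norm
  rwa [norm_mul, hroot.norm_eq_one, mul_one, Complex.norm_real, Real.norm_eq_abs,
    abs_of_pos (one_pos.trans hr)]

theorem eventually_qNum_ne_zero : ∀ᶠ q in 𝓝[GenericSet] qc, qNum q p ≠ 0 :=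
  eventually_nhdsWithin_of_forall fun _ hq => Generic.qNum_ne_zero hq (by have := hroot.1; omega)

theorem tendsto_qNum (n : ℤ) : Tendsto (qNum · n) (𝓝[GenericSet] qc) (𝓝 (qNum qc n)) :=
  (continuousAt_qNum hroot.ne_zero hroot.sq_ne_one n).tendsto.mono_left nhdsWithin_le_nhds

theorem hasOrder_qNum {n : ℕ} (hn : 0 < n) :
    HasOrder (𝓝[GenericSet] qc) (qNum · p) (qNum · n) (if p ∣ n then 1 else 0) := by
  split_ifs with hpn
  · obtain ⟨c, rfl⟩ := hpn
    set g : ℂ → ℂ := fun q => q ^ p * (q ^ (p * c))⁻¹ * ∑ t ∈ range c, (q ^ (2 * p)) ^ t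
    have hg : ContinuousAt g qc := by
      have := hroot.ne_zero
      fun_prop (disch := positivity)
    -- at `qc` the geometric sum is `c`, since `qc ^ (2 * p) = 1`
    have hgqc : g qc ≠ 0 := by
      have : c ≠ 0 := by rintro rfl; simp at hn
      simp [g, hroot.2.1, hroot.ne_zero, this]
    refine ⟨g, ⟨g qc, hgqc, hg.tendsto.mono_left nhdsWithin_le_nhds⟩, ?_⟩
    filter_upwards [self_mem_nhdsWithin] with q hq
    rw [qNum_natCast_mul hq.1, zpow_one, mul_comm]
  · exact .of_tendsto (hroot.tendsto_qNum n) ((hroot.qNum_eq_zero_iff n).not.mpr hpn)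

theorem hasOrder_qFact (n : ℕ) :
    HasOrder (𝓝[GenericSet] qc) (qNum · p) (qFact · n) (n / p : ℕ) := by
  induction n with
  | zero => simpa [qFact] using HasOrder.of_tendsto tendsto_const_nhds one_ne_zero
  | succ n ih =>
    have h := (hroot.hasOrder_qNum n.succ_pos).mul hroot.eventually_qNum_ne_zero ih
    have horder : (((n + 1) / p : ℕ) : ℤ) = (if p ∣ n + 1 then 1 else 0) + (n / p : ℕ) := by
      rw [Nat.succ_div]; push_cast; ring
    simpa only [horder, qFact_succ] using h

theorem hasOrder_qBinom {n l : ℕ} (hln : l ≤ n) :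
    HasOrder (𝓝[GenericSet] qc) (qNum · p) (fun q => qBinom q n l) (addCarry p l (n - l)) := by
  have hp : 0 < p := by have := hroot.1; omega
  have horder : addCarry p l (n - l) = (n / p : ℕ) - ((l / p : ℕ) + ((n - l) / p : ℕ)) := by
    have hdiv := Nat.add_div (a := l) (b := n - l) hp
    rw [Nat.add_sub_cancel' hln] at hdiv
    rw [hdiv, addCarry]; push_cast; ring
  rw [horder]
  simpa only [qBinom_natCast _ hln] using ((hroot.hasOrder_qFact n).div
    hroot.eventually_qNum_ne_zero ((hroot.hasOrder_qFact l).mul hroot.eventually_qNum_ne_zero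
      (hroot.hasOrder_qFact (n - l))))

theorem hasOrder_aCoeff {i k : ℕ} (hki : k ≤ i) (s : ℕ) :
    HasOrder (𝓝[GenericSet] qc) (qNum · p) (fun q => aCoeff q i k s)
      (addCarry p k (i - k) - addCarry p (i + 1) s + (if p ∣ k + s + 1 then 1 else 0) -
        (if p ∣ i + 1 then 1 else 0)) := by
  have he := hroot.eventually_qNum_ne_zero
  have hsign : HasOrder (𝓝[GenericSet] qc) (qNum · p) (fun _ => (-1 : ℂ) ^ ((i : ℤ) + k)) 0 :=
    .of_tendsto tendsto_const_nhds (zpow_ne_zero _ (neg_ne_zero.mpr one_ne_zero))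
  have h := ((((hsign.mul he (hroot.hasOrder_qBinom hki)).mul he
    (hroot.hasOrder_qBinom (by omega : i + 1 ≤ i + s + 1)).inv).mul he
    (hroot.hasOrder_qNum (by omega : 0 < k + s + 1))).div he
    (hroot.hasOrder_qNum (by omega : 0 < i + 1)))
  rw [show i + s + 1 - (i + 1) = s by omega] at h
  convert h using 1
  · ext q; simp only [aCoeff]; push_cast; ring
  · ring

theorem regularAt_iff_of_hasOrder {f : ℂ → ℂ} {n : ℤ}
    (hf : HasOrder (𝓝[GenericSet] qc) (qNum · p) f n) : RegularAt f qc ↔ 0 ≤ n := by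
  have := hroot.neBot_nhdsWithin_genericSet
  have he₀ : Tendsto (qNum · p) (𝓝[GenericSet] qc) (𝓝 0) := by
    simpa [(hroot.qNum_eq_zero_iff p).mpr dvd_rfl] using hroot.tendsto_qNum p
  exact hf.exists_tendsto_iff he₀ hroot.eventually_qNum_ne_zero

theorem not_regularAt_aCoeff_iff {i k k' s : ℕ} (hki : k ≤ i) (hs : p ∣ s + k' + 1)
    (hkk' : k % p ≠ k' % p) :
    ¬RegularAt (fun q => aCoeff q i k s) qc ↔ k % p ≤ i % p ∧ k' % p ≤ i % p := by
  have hp := hroot.1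
  have hborrow := addCarry_sub (p := p) (by omega) hki
  have hcarry := addCarry_succ_add (i := i) (s := s) hp
  have hs' := mod_add_mod_add_one_eq hp hs
  rw [hroot.regularAt_iff_of_hasOrder (hroot.hasOrder_aCoeff hki s), not_le,
    if_neg (not_dvd_add_add_one hs hkk')]
  split_ifs at hborrow hcarry ⊢ <;> omega

end AssocRootOfUnity

/-- for a bound pair `(j, j')` (`k = j−m`, `k' = j'−m`, same cycle,
`j+j' ≡ p−1 mod p`) the following are equivalent: (1) `d ≤ a ∧ d' ≤ a`;
(2) `a_{i,j,m}` is singular at `q_c`; (3) `a_{i,j',m}` is singular at `q_c`. -/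
theorem stmt14 (p : ℕ) (qc : ℂ) (hroot : AssocRootOfUnity qc p)
    (M2 : ℤ) (k k' : ℕ) (hne : k ≠ k')
    (hjm : 0 ≤ M2 + k) (hjm' : 0 ≤ M2 + k')
    (hbound : (M2 + k + k' + 1) % (p : ℤ) = 0)
    (i : ℕ) (hik : k ≤ i) (hik' : k' ≤ i)
    (r u a d d' : ℕ) (ha : a ≤ p - 1) (hd : d ≤ p - 1) (hd' : d' ≤ p - 1)
    (hi : i = r * p + a) (hk : k = u * p + d) (hk' : k' = u * p + d') :
    ((d ≤ a ∧ d' ≤ a) ↔ ¬ RegularAt (fun q => aCoeff q i k (M2 + k)) qc) ∧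
    (¬ RegularAt (fun q => aCoeff q i k (M2 + k)) qc ↔
      ¬ RegularAt (fun q => aCoeff q i k' (M2 + k')) qc) := by
  have hp := hroot.1
  have hi_mod : i % p = a := hi ▸ Nat.mul_add_mod_of_lt (by omega)
  have hk_mod : k % p = d := hk ▸ Nat.mul_add_mod_of_lt (by omega)
  have hk'_mod : k' % p = d' := hk' ▸ Nat.mul_add_mod_of_lt (by omega)
  have hdd' : d ≠ d' := fun h => hne (by rw [hk, hk', h])
  obtain ⟨s, hs⟩ : ∃ s : ℕ, (s : ℤ) = M2 + k := ⟨_, Int.toNat_of_nonneg hjm⟩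
  obtain ⟨s', hs'⟩ : ∃ s' : ℕ, (s' : ℤ) = M2 + k' := ⟨_, Int.toNat_of_nonneg hjm'⟩
  have hdvd : p ∣ s + k' + 1 := Int.natCast_dvd_natCast.mp <| by
    push_cast; rw [hs]; exact Int.dvd_of_emod_eq_zero hbound
  have hdvd' : p ∣ s' + k + 1 := Int.natCast_dvd_natCast.mp <| by
    push_cast; rw [hs', add_right_comm M2]; exact Int.dvd_of_emod_eq_zero hbound
  rw [← hs, ← hs', hroot.not_regularAt_aCoeff_iff hik hdvd (by rwa [hk_mod, hk'_mod]),
    hroot.not_regularAt_aCoeff_iff hik' hdvd' (by rwa [hk_mod, hk'_mod, ne_comm]),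
    hi_mod, hk_mod, hk'_mod]
  exact ⟨Iff.rfl, and_comm⟩

end
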